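/- Let Ω ⊂ ℝⁿ be a bounded convex domain and let u, v ∈ C(closure Ω) be convex functions with u = v on ∂Ω, v ≥ u in Ω, and u Lipschitz on closure(Ω). Then v is Lipschitz on closure(Ω). -/
import Mathlib


open Set

/-- If two convex functions agree on the boundary, one dominates the other inside, and the
smaller one is Lipschitz on the closure, then the bigger one is Lipschitz on the closure. -/
theorem stmt_3 {n : ℕ} (Ω : Set (EuclideanSpace ℝ (Fin n)))
    (hΩo : IsOpen Ω) (hΩc : Convex ℝ Ω) (hΩb : Bornology.IsBounded Ω)
    (u v : EuclideanSpace ℝ (Fin n) → ℝ)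
    (hu_cont : ContinuousOn u (closure Ω)) (hv_cont : ContinuousOn v (closure Ω))
    (hu_conv : ConvexOn ℝ (closure Ω) u) (hv_conv : ConvexOn ℝ (closure Ω) v)
    (hbd : ∀ x ∈ frontier Ω, u x = v x)
    (hle : ∀ x ∈ Ω, u x ≤ v x)
    (hLip : ∃ K : NNReal, LipschitzOnWith K u (closure Ω)) :
    ∃ K : NNReal, LipschitzOnWith K v (closure Ω) := by
  obtain ⟨K, hK⟩ := hLip
  refine ⟨K, ?_⟩
  -- u ≤ v on closure Ω
  have hvu : ∀ x ∈ closure Ω, u x ≤ v x := by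
    intro x hx
    by_cases h : x ∈ Ω
    · exact hle x h
    · exact le_of_eq (hbd x (by rw [hΩo.frontier_eq]; exact ⟨hx, h⟩))
  obtain ⟨R, hR⟩ := (hΩb.closure).exists_norm_le
  -- key one-sided estimate
  have key : ∀ x ∈ closure Ω, ∀ y ∈ closure Ω, v y - v x ≤ K * ‖y - x‖ := by
    intro x hx y hy
    rcases eq_or_ne y x with rfl | hxy
    · simp
    have hnx : (0:ℝ) < ‖y - x‖ := by
      rw [norm_pos_iff]; exact sub_ne_zero.mpr hxy
    set S : Set ℝ := {s : ℝ | 1 ≤ s ∧ x + s • (y - x) ∈ closure Ω} with hS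
    have hSne : S.Nonempty := ⟨1, le_refl 1, by simpa using hy⟩
    have hSbdd : BddAbove S := by
      refine ⟨(R + ‖x‖) / ‖y - x‖, ?_⟩
      rintro s ⟨hs1, hscl⟩
      rw [le_div_iff₀ hnx]
      have h1 := hR _ hscl
      have h2 : ‖s • (y - x)‖ ≤ R + ‖x‖ := by
        have h3 : s • (y - x) = (x + s • (y - x)) - x := by abel
        rw [h3]
        calc ‖(x + s • (y - x)) - x‖ ≤ ‖x + s • (y - x)‖ + ‖x‖ := norm_sub_le _ _
          _ ≤ R + ‖x‖ := by linarith
      calc s * ‖y - x‖ = ‖s • (y - x)‖ := by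
            rw [norm_smul, Real.norm_eq_abs, abs_of_nonneg (by linarith)]
        _ ≤ R + ‖x‖ := h2
    have hScl : IsClosed S := by
      have : S = Ici 1 ∩ (fun s : ℝ => x + s • (y - x)) ⁻¹' closure Ω := by
        ext s; simp [hS, Ici]
      rw [this]
      exact isClosed_Ici.inter (isClosed_closure.preimage (by continuity))
    set t := sSup S with htdef
    have htS : t ∈ S := hScl.csSup_mem hSne hSbdd
    obtain ⟨ht1, hzcl⟩ := htS
    set z := x + t • (y - x) with hzdef
    have ht0 : (0:ℝ) < t := lt_of_lt_of_le one_pos ht1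
    -- z ∉ Ω
    have hznot : z ∉ Ω := by
      intro hz
      obtain ⟨ε, hε, hball⟩ := Metric.isOpen_iff.mp hΩo z hz
      set δ := ε / (2 * ‖y - x‖) with hδ
      have hδ0 : 0 < δ := by positivity
      have hmem : t + δ ∈ S := by
        refine ⟨by linarith, subset_closure (hball ?_)⟩
        rw [Metric.mem_ball, dist_eq_norm]
        have : x + (t + δ) • (y - x) - z = δ • (y - x) := by
          rw [hzdef]; module
        rw [this, norm_smul, Real.norm_eq_abs, abs_of_pos hδ0]
        rw [hδ]
        rw [div_mul_eq_mul_div, mul_comm]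
        rw [mul_div_assoc]
        calc ‖y - x‖ * (ε / (2 * ‖y - x‖)) = ε / 2 := by
              field_simp
          _ < ε := by linarith
      have := le_csSup hSbdd hmem
      linarith
    have hzfr : z ∈ frontier Ω := by rw [hΩo.frontier_eq]; exact ⟨hzcl, hznot⟩
    -- y is a convex combination of x and z
    have hcomb : (1 - 1/t) • x + (1/t) • z = y := by
      rw [hzdef]
      have ht0' : t ≠ 0 := ne_of_gt ht0
      match_scalars <;> field_simp <;> ring
    have ha : (0:ℝ) ≤ 1 - 1/t := by
      have : 1/t ≤ 1 := by rw [div_le_one ht0]; exact ht1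
      linarith
    have hb : (0:ℝ) < 1/t := by positivity
    have hconv := hv_conv.2 hx hzcl ha (le_of_lt hb) (by ring)
    rw [hcomb] at hconv
    simp only [smul_eq_mul] at hconv
    -- v z = u z, u x ≤ v x
    have hvz : v z = u z := (hbd z hzfr).symm
    have hux : u x ≤ v x := hvu x hx
    -- Lipschitz bound for u between x and z
    have hlip := hK.dist_le_mul z hzcl x hx
    simp only [dist_eq_norm] at hlip
    have hzx : ‖z - x‖ = t * ‖y - x‖ := by
      rw [hzdef, add_sub_cancel_left, norm_smul, Real.norm_eq_abs, abs_of_pos ht0]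
    rw [hzx] at hlip
    have huzx : u z - u x ≤ K * (t * ‖y - x‖) :=
      le_trans (le_abs_self _) (by rwa [Real.norm_eq_abs] at hlip)
    -- put it together
    have h1 : v y - v x ≤ (1/t) * (v z - v x) := by nlinarith
    have h2 : v z - v x ≤ u z - u x := by linarith [hvz ▸ le_refl (v z)]
    calc v y - v x ≤ (1/t) * (v z - v x) := h1
      _ ≤ (1/t) * (u z - u x) := by
          apply mul_le_mul_of_nonneg_left _ (le_of_lt hb)
          linarith
      _ ≤ (1/t) * (K * (t * ‖y - x‖)) := by
          apply mul_le_mul_of_nonneg_left huzx (le_of_lt hb)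
      _ = K * ‖y - x‖ := by field_simp
  -- conclude Lipschitz
  rw [lipschitzOnWith_iff_dist_le_mul]
  intro x hx y hy
  rw [Real.dist_eq, dist_eq_norm]
  rcases abs_cases (v x - v y) with ⟨h, _⟩ | ⟨h, _⟩
  · rw [h]
    have := key y hy x hx
    rwa [show ‖x - y‖ = ‖y - x‖ from norm_sub_rev x y] at this ⊢
  · rw [h]
    have := key x hx y hy
    calc -(v x - v y) = v y - v x := by ring
      _ ≤ K * ‖y - x‖ := this
      _ = K * ‖x - y‖ := by rw [norm_sub_rev]
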